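/- (One-step recursive feasibility under deadbeat controllability, nominal case.) Suppose for every time t, every x with dist(x,𝒳_f(t)) ≤ ρ admits an admissible k-step input sequence steering it into 𝒳_f(t+k) under nominal dynamics. If the MPC problem 𝒫(x,t) with horizon N ≥ k is feasible via input sequence u (so φ(x,u,0;N) ∈ 𝒳_f(t)) and dist(φ(x,u,0;N+1−k), 𝒳_f(t+1−k)) ≤ ρ, then 𝒫(ψ(x,u_0,0), t+1) is feasible: the shifted inputs u_1,…,u_{N−1} followed by a deadbeat tail yield an admissible sequence of length N whose nominal endpoint lies in 𝒳_f(t+1). -/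
import Mathlib


/-- k-step composition of the discrete-time system `x⁺ = ψ(x,u,w)`. -/
def flow {X U W : Type*} (ψ : X → U → W → X) (x : X) (u : ℕ → U) (w : ℕ → W) : ℕ → X
  | 0 => x
  | k + 1 => ψ (flow ψ x u w k) (u k) (w k)

lemma flow_congr {X U W : Type*} (ψ : X → U → W → X) (x : X) (u u' : ℕ → U) (w : ℕ → W)
    (j : ℕ) (h : ∀ i < j, u i = u' i) : flow ψ x u w j = flow ψ x u' w j := by
  induction j with
  | zero => rfl
  | succ j ih =>
    simp only [flow, ih (fun i hi => h i (Nat.lt_succ_of_lt hi)), h j (Nat.lt_succ_self j)]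

lemma flow_shift {X U W : Type*} (ψ : X → U → W → X) (x : X) (u : ℕ → U) (w : ℕ → W)
    (j : ℕ) :
    flow ψ (ψ x (u 0) (w 0)) (fun i => u (i + 1)) (fun i => w (i + 1)) j
      = flow ψ x u w (j + 1) := by
  induction j with
  | zero => rfl
  | succ j ih => simp only [flow, ih]

lemma flow_add {X U W : Type*} (ψ : X → U → W → X) (x : X) (u : ℕ → U) (w : ℕ → W)
    (a j : ℕ) :
    flow ψ x u w (a + j) = flow ψ (flow ψ x u w a) (fun i => u (a + i)) (fun i => w (a + i)) j := by
  induction j with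
  | zero => rfl
  | succ j ih =>
    rw [Nat.add_succ]
    simp only [flow, ih]

/-- One-step recursive feasibility under deadbeat controllability, nominal case. -/
theorem one_step_recursive_feasibility {n m p : ℕ}
    (ψ : EuclideanSpace ℝ (Fin n) → EuclideanSpace ℝ (Fin m) → EuclideanSpace ℝ (Fin p) →
      EuclideanSpace ℝ (Fin n))
    (Uset : Set (EuclideanSpace ℝ (Fin m)))
    (Xf : ℤ → Set (EuclideanSpace ℝ (Fin n)))
    (N k : ℕ) (hk1 : 1 ≤ k) (hkN : k ≤ N)
    (ρ : ℝ) (hρ : 0 < ρ)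
    -- deadbeat assumption
    (deadbeat : ∀ (t : ℤ) (x : EuclideanSpace ℝ (Fin n)),
      Metric.infDist x (Xf t) ≤ ρ →
      ∃ v : ℕ → EuclideanSpace ℝ (Fin m), (∀ i < k, v i ∈ Uset) ∧
        flow ψ x v 0 k ∈ Xf (t + (k : ℤ)))
    (t : ℤ) (x : EuclideanSpace ℝ (Fin n)) (u : ℕ → EuclideanSpace ℝ (Fin m))
    -- 𝒫(x,t) is feasible via u
    (hu : ∀ i < N, u i ∈ Uset)
    (hterm : flow ψ x u 0 N ∈ Xf t)
    -- the extended nominal state is ρ-close to the shifted terminal set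
    (hclose : Metric.infDist (flow ψ x u 0 (N + 1 - k)) (Xf (t + 1 - (k : ℤ))) ≤ ρ) :
    -- then 𝒫(ψ(x,u₀,0), t+1) is feasible
    ∃ u' : ℕ → EuclideanSpace ℝ (Fin m), (∀ i < N, u' i ∈ Uset) ∧
      flow ψ (ψ x (u 0) 0) u' 0 N ∈ Xf (t + 1) := by
  obtain ⟨v, hv, hvf⟩ := deadbeat (t + 1 - (k : ℤ)) _ hclose
  set M := N - k with hM
  have hMk : M + k = N := by omega
  have hN1k : N + 1 - k = M + 1 := by omega
  refine ⟨fun i => if i < M then u (i + 1) else v (i - M), ?_, ?_⟩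
  · intro i hi
    by_cases h : i < M
    · simp only [h, if_pos]
      exact hu (i + 1) (by omega)
    · simp only [h, if_neg, if_false]
      exact hv (i - M) (by omega)
  · have key : flow ψ (ψ x (u 0) 0) (fun i => if i < M then u (i + 1) else v (i - M)) 0 N
        = flow ψ (flow ψ x u 0 (M + 1)) v 0 k := by
      rw [← hMk, flow_add]
      have h1 : flow ψ (ψ x (u 0) 0) (fun i => if i < M then u (i + 1) else v (i - M)) 0 M
          = flow ψ x u 0 (M + 1) := by
        rw [← flow_shift ψ x u 0 M]
        exact flow_congr _ _ _ _ _ _ (fun i hi => by simp [hi])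
      rw [h1]
      refine flow_congr _ _ _ _ _ _ (fun i hi => ?_)
      simp only [show ¬ (M + i < M) from by omega, if_false, Nat.add_sub_cancel_left]
    rw [key, ← hN1k]
    have : t + 1 - (k : ℤ) + (k : ℤ) = t + 1 := by ring
    rwa [this] at hvf
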